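/- arXiv:1603.00122 — 3 statements merged into one kernel-verified Lean document; each statement's English description precedes it below -/
import Mathlib

section
/- Suppose b > μ > 0, p : {1,…,n} → ℝ is a probability distribution with p(i) > 0, and ⟨k⟩ = Σᵢ i·p(i). Define f(Ψ) = 1 - (1/⟨k⟩) Σᵢ b·i·p(i)/(μ + b·i·Ψ) for Ψ ∈ [0,1]. Then f is strictly increasing on [0,1], f(0) < 0, f(1) > 0, and hence f has a unique zero Ψ* in (0,1). -/
/-! Each summand `b k p / (μ + b k Ψ)` is positive and strictly decreasing in `Ψ ≥ 0`, so `f` is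
strictly increasing and continuous on `[0, 1]`. At `Ψ = 0` the sum collapses to `(b / μ) ⟨k⟩`, giving
`f 0 = 1 - b / μ < 0`; at `Ψ = 1` each summand is below `p i`, so the sum is below `1 ≤ ⟨k⟩`, giving
`f 1 > 0`. The intermediate value theorem then yields a zero, unique by strict monotonicity. -/

open Finset

theorem existsUnique_zero_of_strictMonoOn_Icc {f : ℝ → ℝ} {a b : ℝ} (hab : a ≤ b)
    (hmono : StrictMonoOn f (Set.Icc a b)) (hcont : ContinuousOn f (Set.Icc a b))
    (ha : f a < 0) (hb : 0 < f b) : ∃! x, x ∈ Set.Ioo a b ∧ f x = 0 := by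
  obtain ⟨x, hx, hfx⟩ := intermediate_value_Ioo hab hcont ⟨ha, hb⟩
  refine ⟨x, ⟨hx, hfx⟩, fun y ⟨hy, hfy⟩ => ?_⟩
  exact hmono.injOn (Set.Ioo_subset_Icc_self hy) (Set.Ioo_subset_Icc_self hx) (hfy.trans hfx.symm)

theorem strictAntiOn_finset_sum {ι : Type*} {s : Finset ι} (hs : s.Nonempty) {t : Set ℝ}
    {f : ι → ℝ → ℝ} (hf : ∀ i ∈ s, StrictAntiOn (f i) t) :
    StrictAntiOn (fun x => ∑ i ∈ s, f i x) t :=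
  fun _ hx _ hy hxy => sum_lt_sum_of_nonempty hs fun i hi => hf i hi hx hy hxy

theorem strictAntiOn_div_add_mul {a c μ : ℝ} (ha : 0 < a) (hc : 0 < c) (hμ : 0 < μ) :
    StrictAntiOn (fun Ψ => a / (μ + c * Ψ)) (Set.Ici 0) := fun x hx _ _ hxy =>
  div_lt_div_of_pos_left ha (by nlinarith [Set.mem_Ici.mp hx]) (by nlinarith)

section Degrees

variable {ι : Type*} (s : Finset ι) (k p : ι → ℝ) (b μ : ℝ)

noncomputable def meanDegree : ℝ := ∑ i ∈ s, k i * p i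

/-- The function `f` of the paper, whose zero is the equilibrium value `Ψ*`. -/
noncomputable def selfConsistency (Ψ : ℝ) : ℝ :=
  1 - (1 / meanDegree s k p) * ∑ i ∈ s, b * k i * p i / (μ + b * k i * Ψ)

variable {s k p b μ}

theorem one_le_meanDegree (hk : ∀ i ∈ s, 1 ≤ k i) (hp : ∀ i ∈ s, 0 < p i)
    (hpsum : ∑ i ∈ s, p i = 1) : 1 ≤ meanDegree s k p :=
  hpsum ▸ sum_le_sum fun i hi => le_mul_of_one_le_left (hp i hi).le (hk i hi)

theorem strictMonoOn_selfConsistency (hs : s.Nonempty) (hk : ∀ i ∈ s, 0 < k i)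
    (hp : ∀ i ∈ s, 0 < p i) (hb : 0 < b) (hμ : 0 < μ) :
    StrictMonoOn (selfConsistency s k p b μ) (Set.Ici 0) := by
  have hK : 0 < meanDegree s k p := sum_pos (fun i hi => mul_pos (hk i hi) (hp i hi)) hs
  have hsum := strictAntiOn_finset_sum hs fun i hi =>
    strictAntiOn_div_add_mul (mul_pos (mul_pos hb (hk i hi)) (hp i hi)) (mul_pos hb (hk i hi)) hμ
  intro x hx y hy hxy
  have := mul_lt_mul_of_pos_left (hsum hx hy hxy) (one_div_pos.mpr hK)
  simp only [selfConsistency]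
  linarith

theorem continuousOn_selfConsistency (hk : ∀ i ∈ s, 0 ≤ k i) (hb : 0 ≤ b) (hμ : 0 < μ) :
    ContinuousOn (selfConsistency s k p b μ) (Set.Ici 0) := by
  refine continuousOn_const.sub (continuousOn_const.mul (continuousOn_finsetSum _ fun i hi => ?_))
  refine continuousOn_const.div (by fun_prop) fun Ψ hΨ => ?_
  have : 0 ≤ b * k i * Ψ := mul_nonneg (mul_nonneg hb (hk i hi)) hΨ
  positivity

theorem selfConsistency_zero (hK : meanDegree s k p ≠ 0) (hμ : μ ≠ 0) :
    selfConsistency s k p b μ 0 = 1 - b / μ := by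
  have hsum : ∑ i ∈ s, b * k i * p i / (μ + b * k i * 0) = b / μ * meanDegree s k p := by
    rw [meanDegree, mul_sum]
    exact sum_congr rfl fun i _ => by rw [mul_zero, add_zero]; field_simp
  rw [selfConsistency, hsum]
  field_simp

theorem selfConsistency_one_pos (hs : s.Nonempty) (hk : ∀ i ∈ s, 1 ≤ k i)
    (hp : ∀ i ∈ s, 0 < p i) (hpsum : ∑ i ∈ s, p i = 1) (hb : 0 < b) (hμ : 0 < μ) :
    0 < selfConsistency s k p b μ 1 := by
  have hK := one_le_meanDegree hk hp hpsum
  have hterm : ∀ i ∈ s, b * k i * p i / (μ + b * k i * 1) < p i := fun i hi => by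
    have hbk : 0 < b * k i := mul_pos hb (by linarith [hk i hi])
    rw [div_lt_iff₀ (by linarith)]
    nlinarith [mul_pos (hp i hi) hμ]
  have hsum : ∑ i ∈ s, b * k i * p i / (μ + b * k i * 1) < meanDegree s k p :=
    calc _ < ∑ i ∈ s, p i := sum_lt_sum_of_nonempty hs hterm
      _ ≤ meanDegree s k p := hpsum ▸ hK
  have := mul_lt_mul_of_pos_left hsum (one_div_pos.mpr (zero_lt_one.trans_le hK))
  rw [one_div_mul_cancel (zero_lt_one.trans_le hK).ne'] at this
  rw [selfConsistency]
  linarith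

end Degrees

theorem demographic_threshold_general (n : ℕ) (b μ : ℝ) (hμ : 0 < μ) (hbμ : μ < b)
    (p : ℕ → ℝ) (hp : ∀ i ∈ Finset.Icc 1 n, 0 < p i)
    (hpsum : ∑ i ∈ Finset.Icc 1 n, p i = 1) :
    StrictMonoOn
      (fun Ψ : ℝ => 1 - (1 / ∑ i ∈ Finset.Icc 1 n, (i : ℝ) * p i) *
        ∑ i ∈ Finset.Icc 1 n, b * (i : ℝ) * p i / (μ + b * (i : ℝ) * Ψ))
      (Set.Icc 0 1) ∧
    (1 - (1 / ∑ i ∈ Finset.Icc 1 n, (i : ℝ) * p i) *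
        ∑ i ∈ Finset.Icc 1 n, b * (i : ℝ) * p i / (μ + b * (i : ℝ) * 0)) < 0 ∧
    0 < (1 - (1 / ∑ i ∈ Finset.Icc 1 n, (i : ℝ) * p i) *
        ∑ i ∈ Finset.Icc 1 n, b * (i : ℝ) * p i / (μ + b * (i : ℝ) * 1)) ∧
    (∃! Ψ : ℝ, Ψ ∈ Set.Ioo (0:ℝ) 1 ∧
      1 - (1 / ∑ i ∈ Finset.Icc 1 n, (i : ℝ) * p i) *
        ∑ i ∈ Finset.Icc 1 n, b * (i : ℝ) * p i / (μ + b * (i : ℝ) * Ψ) = 0) := by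
  let f := selfConsistency (Finset.Icc 1 n) (fun i : ℕ => (i : ℝ)) p b μ
  have hb : 0 < b := hμ.trans hbμ
  have hs : (Finset.Icc 1 n).Nonempty := nonempty_of_sum_ne_zero (hpsum ▸ one_ne_zero)
  have hk : ∀ i ∈ Finset.Icc 1 n, (1 : ℝ) ≤ i := fun i hi =>
    mod_cast (mem_Icc.mp hi).1
  have hkpos : ∀ i ∈ Finset.Icc 1 n, (0 : ℝ) < i := fun i hi => one_pos.trans_le (hk i hi)
  have hmono : StrictMonoOn f (Set.Icc 0 1) :=
    (strictMonoOn_selfConsistency hs hkpos hp hb hμ).mono Set.Icc_subset_Ici_self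
  have hf0 : f 0 < 0 := by
    have hK := zero_lt_one.trans_le (one_le_meanDegree hk hp hpsum)
    rw [show f 0 = 1 - b / μ from selfConsistency_zero hK.ne' hμ.ne', sub_neg]
    exact (one_lt_div hμ).mpr hbμ
  have hf1 : 0 < f 1 := selfConsistency_one_pos hs hk hp hpsum hb hμ
  have hcont : ContinuousOn f (Set.Icc 0 1) :=
    (continuousOn_selfConsistency (fun i hi => (hkpos i hi).le) hb.le hμ).mono
      Set.Icc_subset_Ici_self
  exact ⟨hmono, hf0, hf1, existsUnique_zero_of_strictMonoOn_Icc zero_le_one hmono hcont hf0 hf1⟩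

theorem demographic_threshold (n : ℕ) (hn : 0 < n) (b μ : ℝ) (hμ : 0 < μ) (hbμ : μ < b)
    (p : ℕ → ℝ) (hp : ∀ i ∈ Finset.Icc 1 n, 0 < p i)
    (hpsum : ∑ i ∈ Finset.Icc 1 n, p i = 1) :
    StrictMonoOn
      (fun Ψ : ℝ => 1 - (1 / ∑ i ∈ Finset.Icc 1 n, (i : ℝ) * p i) *
        ∑ i ∈ Finset.Icc 1 n, b * (i : ℝ) * p i / (μ + b * (i : ℝ) * Ψ))
      (Set.Icc 0 1) ∧
    (1 - (1 / ∑ i ∈ Finset.Icc 1 n, (i : ℝ) * p i) *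
        ∑ i ∈ Finset.Icc 1 n, b * (i : ℝ) * p i / (μ + b * (i : ℝ) * 0)) < 0 ∧
    0 < (1 - (1 / ∑ i ∈ Finset.Icc 1 n, (i : ℝ) * p i) *
        ∑ i ∈ Finset.Icc 1 n, b * (i : ℝ) * p i / (μ + b * (i : ℝ) * 1)) ∧
    (∃! Ψ : ℝ, Ψ ∈ Set.Ioo (0:ℝ) 1 ∧
      1 - (1 / ∑ i ∈ Finset.Icc 1 n, (i : ℝ) * p i) *
        ∑ i ∈ Finset.Icc 1 n, b * (i : ℝ) * p i / (μ + b * (i : ℝ) * Ψ) = 0) :=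
  demographic_threshold_general n b μ hμ hbμ p hp hpsum
end

section
/- Suppose 0 < b ≤ μ, p : {1,…,n} → ℝ is a probability distribution with p(i)>0, and f(Ψ) = 1 - (1/⟨k⟩) Σᵢ b·i·p(i)/(μ + b·i·Ψ). Then f(Ψ) > 0 for all Ψ ∈ (0,1]; in particular f has no zero in (0,1]. -/
/-! Since `μ + b i Ψ > μ ≥ b`, each summand `b i p(i) / (μ + b i Ψ)` is strictly smaller than
`i p(i)`; summing over degrees, the weighted sum is strictly below `⟨k⟩`. -/

open Finset

lemma mul_div_add_lt_self {b μ w y : ℝ} (hb : 0 < b) (hbμ : b ≤ μ) (hw : 0 < w) (hy : 0 < y) :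
    b * w / (μ + y) < w := by
  rw [div_lt_iff₀ (by linarith)]
  nlinarith

theorem extinction_no_positive_equilibrium_general (n : ℕ) (hn : 0 < n) (b μ : ℝ)
    (hb : 0 < b) (hbμ : b ≤ μ)
    (p : ℕ → ℝ) (hp : ∀ i ∈ Finset.Icc 1 n, 0 < p i) :
    ∀ Ψ ∈ Set.Ioc (0:ℝ) 1,
      0 < 1 - (1 / ∑ i ∈ Finset.Icc 1 n, (i : ℝ) * p i) *
        ∑ i ∈ Finset.Icc 1 n, b * (i : ℝ) * p i / (μ + b * (i : ℝ) * Ψ) := by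
  rintro Ψ ⟨hΨ, -⟩
  have hne : (Icc 1 n).Nonempty := nonempty_Icc.2 hn
  have hdeg : ∀ i ∈ Icc 1 n, (0 : ℝ) < i := fun i hi => by
    exact_mod_cast (mem_Icc.1 hi).1
  have hweight : ∀ i ∈ Icc 1 n, (0 : ℝ) < i * p i := fun i hi =>
    mul_pos (hdeg i hi) (hp i hi)
  have hlt : ∑ i ∈ Icc 1 n, b * (i : ℝ) * p i / (μ + b * i * Ψ) < ∑ i ∈ Icc 1 n, (i : ℝ) * p i :=
    sum_lt_sum_of_nonempty hne fun i hi => by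
      rw [mul_assoc b]
      exact mul_div_add_lt_self hb hbμ (hweight i hi) (by have := hdeg i hi; positivity)
  rw [one_div_mul_eq_div, sub_pos, div_lt_one (sum_pos hweight hne)]
  exact hlt

theorem extinction_no_positive_equilibrium (n : ℕ) (hn : 0 < n) (b μ : ℝ)
    (hb : 0 < b) (hbμ : b ≤ μ)
    (p : ℕ → ℝ) (hp : ∀ i ∈ Finset.Icc 1 n, 0 < p i)
    (hpsum : ∑ i ∈ Finset.Icc 1 n, p i = 1) :
    ∀ Ψ ∈ Set.Ioc (0:ℝ) 1,
      0 < 1 - (1 / ∑ i ∈ Finset.Icc 1 n, (i : ℝ) * p i) *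
        ∑ i ∈ Finset.Icc 1 n, b * (i : ℝ) * p i / (μ + b * (i : ℝ) * Ψ) :=
  extinction_no_positive_equilibrium_general n hn b μ hb hbμ p hp
end

section
/- Let λ ∈ ℂ with Re λ ≥ 0, and K₂(λ) = ∫₀^∞ γ(τ) e^{-λτ} e^{-μτ - ∫₀^τ γ(ξ)dξ} dτ with μ > 0 and γ ≥ 0 integrable. Then |K₂(λ)| < 1, so in particular K₂(λ) ≠ 1 + (λ+μ)/(i·b·c) for any i ∈ {1,…,n} and real b, c > 0 when λ ≥ 0 is real (since the right side is ≥ 1). -/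
/-!
Let `Γ τ = ∫₀^τ γ` and `S τ = exp (-μ τ - Γ τ)`. By the Lebesgue differentiation theorem
`-S' = (μ + γ) S` almost everywhere, and `-S` is monotone on `[0, ∞)`, so the fundamental theorem
of calculus for monotone functions (an inequality, which is all that is needed) gives
`∫₀^T γ S + μ ∫₀^T S ≤ 1 - S T ≤ 1`. Letting `T → ∞`, `∫₀^∞ γ S ≤ 1 - μ ∫₀^1 S < 1`.
For `Re λ ≥ 0` the factor `e^{-λτ}` has modulus at most one, so `|K₂(λ)| ≤ ∫₀^∞ γ S < 1`;
for real `λ ≥ 0` the right-hand side `1 + (λ + μ) / (i b c)` exceeds one.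
-/

open MeasureTheory Set Filter intervalIntegral

theorem intervalIntegrable_of_integrableOn_Ioi {f : ℝ → ℝ} {μ : Measure ℝ} {a b : ℝ}
    (hf : IntegrableOn f (Ioi a) μ) (hab : a ≤ b) : IntervalIntegrable f μ a b :=
  (intervalIntegrable_iff_integrableOn_Ioc_of_le hab).2 (hf.mono_set Ioc_subset_Ioi_self)

theorem monotoneOn_integral_of_nonneg {h : ℝ → ℝ} {a b : ℝ}
    (h0 : ∀ x ∈ Icc a b, 0 ≤ h x) (hint : IntervalIntegrable h volume a b) :
    MonotoneOn (fun x => ∫ t in a..x, h t) (Icc a b) := by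
  intro x hx y hy hxy
  have hy' : IntervalIntegrable h volume a y := hint.mono_set (by
    rw [uIcc_of_le hy.1, uIcc_of_le (hx.1.trans (hxy.trans hy.2))]
    exact Icc_subset_Icc le_rfl hy.2)
  refine integral_mono_interval le_rfl hx.1 hxy ?_ hy'
  refine (ae_restrict_iff' measurableSet_Ioc).2 (Eventually.of_forall fun t ht => h0 t ?_)
  exact ⟨ht.1.le, ht.2.trans hy.2⟩

theorem integral_mul_exp_neg_integral_le {h : ℝ → ℝ} {a b : ℝ} (hab : a ≤ b)
    (h0 : ∀ x ∈ Icc a b, 0 ≤ h x) (hint : IntervalIntegrable h volume a b) :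
    ∫ x in a..b, h x * Real.exp (-∫ t in a..x, h t) ≤ 1 - Real.exp (-∫ t in a..b, h t) := by
  set F : ℝ → ℝ := fun x => -Real.exp (-∫ t in a..x, h t)
  have hF : MonotoneOn F (uIcc a b) := by
    rw [uIcc_of_le hab]
    intro x hx y hy hxy
    exact neg_le_neg (Real.exp_le_exp.2
      (neg_le_neg (monotoneOn_integral_of_nonneg h0 hint hx hy hxy)))
  have hderiv : ∀ᵐ x, x ∈ uIoc a b → h x * Real.exp (-∫ t in a..x, h t) = deriv F x := by
    filter_upwards [hint.ae_hasDerivAt_integral] with x hx hxab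
    rw [(hx (uIoc_subset_uIcc hxab) a left_mem_uIcc).fun_neg.exp.fun_neg.deriv]
    ring
  have hFab : 0 ≤ F b - F a := sub_nonneg.2 (hF left_mem_uIcc right_mem_uIcc hab)
  calc ∫ x in a..b, h x * Real.exp (-∫ t in a..x, h t) = ∫ x in a..b, deriv F x :=
        integral_congr_ae hderiv
    _ ≤ F b - F a := (uIcc_of_le hFab ▸ hF.intervalIntegral_deriv_mem_uIcc).2
    _ = 1 - Real.exp (-∫ t in a..b, h t) := by simp [F, sub_eq_add_neg, add_comm]

noncomputable def survival (μ : ℝ) (γ : ℝ → ℝ) (τ : ℝ) : ℝ :=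
  Real.exp (-μ * τ - ∫ ξ in (0:ℝ)..τ, γ ξ)

section Survival

variable {μ T : ℝ} {γ : ℝ → ℝ}

theorem survival_pos (μ : ℝ) (γ : ℝ → ℝ) (τ : ℝ) : 0 < survival μ γ τ := Real.exp_pos _

theorem survival_le_one (hμ : 0 ≤ μ) {τ : ℝ} (hτ : 0 ≤ τ) (hγ0 : ∀ ξ ∈ Icc 0 τ, 0 ≤ γ ξ) :
    survival μ γ τ ≤ 1 := by
  have : 0 ≤ ∫ ξ in (0:ℝ)..τ, γ ξ := integral_nonneg hτ hγ0
  exact Real.exp_le_one_iff.2 (by linarith [mul_nonneg hμ hτ])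

theorem continuousOn_survival_uIcc (hγ : IntervalIntegrable γ volume 0 T) :
    ContinuousOn (survival μ γ) (uIcc 0 T) :=
  Real.continuous_exp.comp_continuousOn ((continuousOn_const.mul continuousOn_id).sub
    (continuousOn_primitive_interval' hγ left_mem_uIcc))

theorem continuousOn_survival_Ioi (hγ : IntegrableOn γ (Ioi 0)) :
    ContinuousOn (survival μ γ) (Ioi 0) := by
  intro τ (hτ : 0 < τ)
  have hγτ := intervalIntegrable_of_integrableOn_Ioi hγ (by linarith : (0:ℝ) ≤ τ + 1)
  refine ((continuousOn_survival_uIcc hγτ).continuousAt ?_).continuousWithinAt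
  rw [uIcc_of_le (by linarith)]
  exact Icc_mem_nhds hτ (by linarith)

theorem integrableOn_mul_survival (hμ : 0 ≤ μ) (hγ0 : ∀ τ, 0 ≤ τ → 0 ≤ γ τ)
    (hγ : IntegrableOn γ (Ioi 0)) :
    IntegrableOn (fun τ => γ τ * survival μ γ τ) (Ioi 0) := by
  refine hγ.mul_bdd ((continuousOn_survival_Ioi hγ).aestronglyMeasurable measurableSet_Ioi)
    (c := 1) ((ae_restrict_iff' measurableSet_Ioi).2 (Eventually.of_forall fun τ hτ => ?_))
  rw [Real.norm_of_nonneg (survival_pos μ γ τ).le]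
  exact survival_le_one hμ (le_of_lt hτ) fun ξ hξ => hγ0 ξ hξ.1

theorem integral_mul_survival_add_mul_integral_survival_le_one (hμ : 0 ≤ μ) (hT : 0 ≤ T)
    (hγ0 : ∀ τ ∈ Icc 0 T, 0 ≤ γ τ) (hγ : IntervalIntegrable γ volume 0 T) :
    (∫ τ in 0..T, γ τ * survival μ γ τ) + μ * ∫ τ in 0..T, survival μ γ τ ≤ 1 := by
  have hhazard : EqOn (fun τ => (μ + γ τ) * Real.exp (-∫ t in 0..τ, (μ + γ t)))
      (fun τ => γ τ * survival μ γ τ + μ * survival μ γ τ) (uIcc 0 T) := by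
    intro τ hτ
    have hsplit : ∫ t in (0:ℝ)..τ, (μ + γ t) = μ * τ + ∫ t in (0:ℝ)..τ, γ t := by
      simp [integral_add intervalIntegrable_const (hγ.mono_set (uIcc_subset_uIcc_left hτ)),
        mul_comm]
    simp only [survival, hsplit]
    ring_nf
  have key := integral_mul_exp_neg_integral_le (h := fun τ => μ + γ τ) hT
    (fun τ hτ => add_nonneg hμ (hγ0 τ hτ)) (intervalIntegrable_const.add hγ)
  have hS : IntervalIntegrable (survival μ γ) volume 0 T :=
    (continuousOn_survival_uIcc hγ).intervalIntegrable
  rw [integral_congr hhazard, integral_add (hγ.mul_continuousOn (continuousOn_survival_uIcc hγ))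
    (hS.const_mul μ), intervalIntegral.integral_const_mul] at key
  linarith [Real.exp_pos (-∫ t in (0:ℝ)..T, (μ + γ t))]

theorem integral_mul_survival_lt_one (hμ : 0 < μ) (hγ0 : ∀ τ, 0 ≤ τ → 0 ≤ γ τ)
    (hγ : IntegrableOn γ (Ioi 0)) :
    ∫ τ in Ioi 0, γ τ * survival μ γ τ < 1 := by
  have hS : ∀ T, 0 ≤ T → IntervalIntegrable (survival μ γ) volume 0 T := fun T hT =>
    (continuousOn_survival_uIcc (intervalIntegrable_of_integrableOn_Ioi hγ hT)).intervalIntegrable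
  have hc : 0 < ∫ τ in (0:ℝ)..1, survival μ γ τ :=
    intervalIntegral_pos_of_pos (hS 1 zero_le_one) (survival_pos μ γ) one_pos
  have hbound : ∀ T, 1 ≤ T →
      ∫ τ in 0..T, γ τ * survival μ γ τ ≤ 1 - μ * ∫ τ in (0:ℝ)..1, survival μ γ τ := by
    intro T hT
    have hmono : ∫ τ in (0:ℝ)..1, survival μ γ τ ≤ ∫ τ in (0:ℝ)..T, survival μ γ τ :=
      integral_mono_interval le_rfl zero_le_one hT
        (Eventually.of_forall fun τ => (survival_pos μ γ τ).le) (hS T (by linarith))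
    have := integral_mul_survival_add_mul_integral_survival_le_one hμ.le (by linarith : 0 ≤ T)
      (fun τ hτ => hγ0 τ hτ.1) (intervalIntegrable_of_integrableOn_Ioi hγ (by linarith))
    linarith [mul_le_mul_of_nonneg_left hmono hμ.le]
  have hlim := intervalIntegral_tendsto_integral_Ioi 0 (integrableOn_mul_survival hμ.le hγ0 hγ)
    tendsto_id
  calc ∫ τ in Ioi 0, γ τ * survival μ γ τ ≤ 1 - μ * ∫ τ in (0:ℝ)..1, survival μ γ τ :=
        le_of_tendsto hlim ((eventually_ge_atTop 1).mono hbound)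
    _ < 1 := sub_lt_self 1 (mul_pos hμ hc)

end Survival

theorem norm_integral_Ioi_ofReal_mul_cexp_le {f : ℝ → ℝ} (hf0 : ∀ τ, 0 < τ → 0 ≤ f τ)
    (hf : IntegrableOn f (Ioi 0)) {lam : ℂ} (hlam : 0 ≤ lam.re) :
    ‖∫ τ in Ioi (0:ℝ), (f τ : ℂ) * Complex.exp (-lam * τ)‖ ≤ ∫ τ in Ioi 0, f τ := by
  refine norm_integral_le_of_norm_le hf ((ae_restrict_iff' measurableSet_Ioi).2
    (Eventually.of_forall fun τ (hτ : 0 < τ) => ?_))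
  have hexp : ‖Complex.exp (-lam * τ)‖ ≤ 1 := by
    rw [Complex.norm_exp, Real.exp_le_one_iff]
    simpa using mul_nonneg hlam hτ.le
  rw [norm_mul, Complex.norm_real, Real.norm_of_nonneg (hf0 τ hτ)]
  exact mul_le_of_le_one_right (hf0 τ hτ) hexp

theorem integral_Ioi_ofReal_mul_cexp_ofReal (f : ℝ → ℝ) (lam : ℝ) :
    ∫ τ in Ioi (0:ℝ), (f τ : ℂ) * Complex.exp (-(lam : ℂ) * τ) =
      ((∫ τ in Ioi (0:ℝ), f τ * Real.exp (-lam * τ) : ℝ) : ℂ) := by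
  have hcast (τ : ℝ) : (f τ : ℂ) * Complex.exp (-(lam : ℂ) * τ) =
      ((f τ * Real.exp (-lam * τ) : ℝ) : ℂ) := by
    push_cast
    rfl
  simp_rw [hcast]
  exact _root_.integral_ofReal

theorem K2_abs_lt_one (μ : ℝ) (hμ : 0 < μ) (γ : ℝ → ℝ)
    (hγ0 : ∀ τ, 0 ≤ τ → 0 ≤ γ τ)
    (hγint : IntegrableOn γ (Set.Ioi 0)) :
    (∀ lam : ℂ, 0 ≤ lam.re →
      ‖(∫ τ in Set.Ioi (0:ℝ),
        (γ τ * Real.exp (-μ * τ - ∫ ξ in (0:ℝ)..τ, γ ξ) : ℝ) *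
          Complex.exp (-lam * τ))‖ < 1) ∧
    ∀ lam : ℝ, 0 ≤ lam → ∀ n : ℕ, ∀ i ∈ Finset.Icc 1 n, ∀ b c : ℝ, 0 < b → 0 < c →
      (∫ τ in Set.Ioi (0:ℝ),
        γ τ * Real.exp (-μ * τ - ∫ ξ in (0:ℝ)..τ, γ ξ) * Real.exp (-lam * τ))
        ≠ 1 + (lam + μ) / ((i : ℝ) * b * c) := by
  have hK2 : ∀ lam : ℂ, 0 ≤ lam.re →
      ‖∫ τ in Ioi (0:ℝ), ((γ τ * survival μ γ τ : ℝ) : ℂ) * Complex.exp (-lam * τ)‖ < 1 :=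
    fun lam hlam => (norm_integral_Ioi_ofReal_mul_cexp_le
      (fun τ hτ => mul_nonneg (hγ0 τ hτ.le) (survival_pos μ γ τ).le)
      (integrableOn_mul_survival hμ.le hγ0 hγint) hlam).trans_lt
      (integral_mul_survival_lt_one hμ hγ0 hγint)
  refine ⟨hK2, fun lam hlam n i hi b c hb hc => ?_⟩
  have hlt := hK2 lam (by simpa using hlam)
  rw [integral_Ioi_ofReal_mul_cexp_ofReal, Complex.norm_real, Real.norm_eq_abs] at hlt
  have hi : (1 : ℝ) ≤ i := by exact_mod_cast (Finset.mem_Icc.1 hi).1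
  have hpos : 0 < (lam + μ) / ((i : ℝ) * b * c) := by positivity
  exact ((le_abs_self _).trans_lt hlt).trans (lt_add_of_pos_right 1 hpos) |>.ne
end
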